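/- Let α ∈ (0,1). Every measurable test ψ : ℝ → [0,1] with size ∫ψ dμ_0 ≤ α satisfies, for every h ∈ ℝ, ∫ψ dμ_h ≤ min{α·e^{h/λ}, 1} + 1 − min{e^{h/λ}, 1}. (This is the two-sided power envelope at level α for testing μ_0 against all alternatives μ_h, h ≠ 0.) -/

import Mathlib

/-!
Translation by `h` carries `μ_0`, the exponential distribution of rate `1/λ`, to `μ_h`. On
`(0, ∞)` the density of `μ_h` is at most `e^{h/λ}` times that of `μ_0` (with equality when
`h ≤ 0`: memorylessness), so the power of `ψ` at `μ_h` is at most `e^{h/λ}` times its size plus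
the mass `μ_h (-∞, 0] = 1 - min{e^{h/λ}, 1}`, read off the exponential CDF. Together with the
trivial bound `1` this is the envelope.
-/

open MeasureTheory Real

noncomputable section

attribute [local instance] Classical.propDecidable

/-- The exponential distribution with scale `lam` shifted to start at `h`:
the measure on `ℝ` with Lebesgue density `w ↦ lam⁻¹ e^{−(w−h)/lam} 𝟙{w > h}`. -/
def expShift (lam h : ℝ) : Measure ℝ :=
  (volume : Measure ℝ).withDensity fun w =>
    ENNReal.ofReal (lam⁻¹ * exp (-(w - h) / lam) * if h < w then 1 else 0)

open Set Filter ProbabilityTheory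
open scoped ENNReal NNReal

theorem MeasureTheory.Measure.map_add_right_withDensity {G : Type*} [MeasurableSpace G]
    [AddGroup G] [MeasurableAdd G] (μ : Measure G) [μ.IsAddRightInvariant] (f : G → ℝ≥0∞) (g : G) :
    (μ.withDensity f).map (· + g) = μ.withDensity fun x => f (x - g) := by
  ext s hs
  rw [Measure.map_apply (measurable_add_const g) hs, withDensity_apply _ hs,
    withDensity_apply _ (measurable_add_const g hs),
    ← (measurePreserving_add_right μ g).setLIntegral_comp_preimage_emb
      (measurableEmbedding_addRight g) (fun x => f (x - g))]
  simp only [add_sub_cancel_right]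

theorem integral_le_mul_integral_add_measureReal_compl {α : Type*} [MeasurableSpace α]
    {μ ν : Measure α} [IsFiniteMeasure μ] [IsFiniteMeasure ν] {s : Set α} (hs : MeasurableSet s)
    {c : ℝ≥0} (hμν : μ.restrict s ≤ c • ν) {ψ : α → ℝ} (hψ : Measurable ψ)
    (hψ01 : ∀ x, ψ x ∈ Icc (0 : ℝ) 1) :
    ∫ x, ψ x ∂μ ≤ c * ∫ x, ψ x ∂ν + μ.real sᶜ := by
  have hint : ∀ (ρ : Measure α) [IsFiniteMeasure ρ], Integrable ψ ρ := fun ρ _ =>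
    .of_bound hψ.aestronglyMeasurable 1 (Eventually.of_forall fun x => by
      rw [norm_of_nonneg (hψ01 x).1]; exact (hψ01 x).2)
  have hs_le : ∫ x in s, ψ x ∂μ ≤ c * ∫ x, ψ x ∂ν := by
    rw [← smul_eq_mul, ← NNReal.smul_def, ← integral_smul_nnreal_measure]
    exact integral_mono_measure hμν (Eventually.of_forall fun x => (hψ01 x).1) (hint _)
  have hsc_le : ∫ x in sᶜ, ψ x ∂μ ≤ μ.real sᶜ := by
    simpa using setIntegral_mono (hint _).integrableOn (integrableOn_const (C := (1 : ℝ)))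
      fun x => (hψ01 x).2
  rw [← integral_add_compl hs (hint μ)]
  exact add_le_add hs_le hsc_le

theorem integral_le_one_of_mem_Icc {α : Type*} [MeasurableSpace α] {μ : Measure α}
    [IsProbabilityMeasure μ] {ψ : α → ℝ} (hψ01 : ∀ x, ψ x ∈ Icc (0 : ℝ) 1) :
    ∫ x, ψ x ∂μ ≤ 1 := by
  simpa using integral_mono_of_nonneg (Eventually.of_forall fun x => (hψ01 x).1)
    (integrable_const (μ := μ) (1 : ℝ)) (Eventually.of_forall fun x => (hψ01 x).2)

theorem expShift_zero (lam : ℝ) : expShift lam 0 = expMeasure lam⁻¹ := by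
  refine withDensity_congr_ae ?_
  filter_upwards [Measure.ae_ne volume 0] with w hw
  change _ = exponentialPDF lam⁻¹ w
  rw [exponentialPDF_eq]
  rcases hw.lt_or_gt with hw | hw
  · simp [hw.not_gt, hw.not_ge]
  · simp [hw, hw.le, div_eq_inv_mul]

theorem expShift_eq_map (lam h : ℝ) : expShift lam h = (expShift lam 0).map (· + h) := by
  rw [expShift, expShift, Measure.map_add_right_withDensity]
  simp only [sub_zero, sub_pos]

theorem isProbabilityMeasure_expShift {lam : ℝ} (hlam : 0 < lam) (h : ℝ) :
    IsProbabilityMeasure (expShift lam h) := by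
  have := isProbabilityMeasure_expMeasure (inv_pos.mpr hlam)
  rw [expShift_eq_map, expShift_zero]
  exact Measure.isProbabilityMeasure_map (measurable_add_const h).aemeasurable

theorem measureReal_expShift_Iic_zero {lam : ℝ} (hlam : 0 < lam) (h : ℝ) :
    (expShift lam h).real (Iic 0) = 1 - min (exp (h / lam)) 1 := by
  have := isProbabilityMeasure_expMeasure (inv_pos.mpr hlam)
  rw [expShift_eq_map, expShift_zero, map_measureReal_apply (measurable_add_const h)
    measurableSet_Iic, preimage_add_const_Iic, ← cdf_eq_real, cdf_expMeasure_eq (inv_pos.mpr hlam)]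
  rcases le_or_gt h 0 with hh | hh
  · have : exp (h / lam) ≤ 1 := exp_le_one_iff.mpr (div_nonpos_of_nonpos_of_nonneg hh hlam.le)
    rw [if_pos (by linarith), min_eq_left this]
    ring_nf
  · have : 1 ≤ exp (h / lam) := one_le_exp (div_nonneg hh.le hlam.le)
    rw [if_neg (by linarith), min_eq_right this]
    ring

theorem expShift_restrict_Ioi_zero_le {lam : ℝ} (hlam : 0 < lam) (h : ℝ) :
    (expShift lam h).restrict (Ioi 0) ≤ (exp (h / lam)).toNNReal • expShift lam 0 := by
  rw [expShift, expShift, restrict_withDensity measurableSet_Ioi,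
    ← withDensity_indicator measurableSet_Ioi, ENNReal.smul_def,
    ← withDensity_smul' _ _ ENNReal.coe_ne_top]
  refine withDensity_mono (Eventually.of_forall fun w => ?_)
  rcases le_or_gt w 0 with hw | hw
  · simp [indicator_of_notMem (notMem_Ioi.mpr hw)]
  · have hshift : exp (-(w - h) / lam) = exp (h / lam) * exp (-(w - 0) / lam) := by
      rw [← exp_add]; ring_nf
    simp only [indicator_of_mem (mem_Ioi.mpr hw), Pi.smul_apply, smul_eq_mul, if_pos hw]
    change _ ≤ ENNReal.ofReal (exp (h / lam)) * _
    rw [← ENNReal.ofReal_mul (exp_pos _).le]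
    refine ENNReal.ofReal_le_ofReal ?_
    calc lam⁻¹ * exp (-(w - h) / lam) * (if h < w then 1 else 0)
        ≤ lam⁻¹ * exp (-(w - h) / lam) :=
          mul_le_of_le_one_right (by positivity) (by split_ifs <;> norm_num)
      _ = exp (h / lam) * (lam⁻¹ * exp (-(w - 0) / lam) * 1) := by rw [hshift]; ring

theorem power_envelope_two_sided_general (lam α : ℝ) (hlam : 0 < lam)
    (ψ : ℝ → ℝ) (hmeas : Measurable ψ) (hrange : ∀ w, ψ w ∈ Set.Icc (0 : ℝ) 1)
    (hsize : ∫ w, ψ w ∂ expShift lam 0 ≤ α) :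
    ∀ h : ℝ, ∫ w, ψ w ∂ expShift lam h ≤
      min (α * exp (h / lam)) 1 + 1 - min (exp (h / lam)) 1 := by
  intro h
  have := isProbabilityMeasure_expShift hlam h
  have := isProbabilityMeasure_expShift hlam 0
  have hle_one : ∫ w, ψ w ∂ expShift lam h ≤ 1 := integral_le_one_of_mem_Icc hrange
  have hle : ∫ w, ψ w ∂ expShift lam h ≤
      exp (h / lam) * ∫ w, ψ w ∂ expShift lam 0 + (1 - min (exp (h / lam)) 1) := by
    have := integral_le_mul_integral_add_measureReal_compl (μ := expShift lam h)
      (ν := expShift lam 0) measurableSet_Ioi (expShift_restrict_Ioi_zero_le hlam h) hmeas hrange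
    rwa [compl_Ioi, measureReal_expShift_Iic_zero hlam,
      Real.coe_toNNReal _ (exp_pos _).le] at this
  have hscaled := mul_le_mul_of_nonneg_left hsize (exp_pos (h / lam)).le
  rcases le_total (α * exp (h / lam)) 1 with hαc | hαc
  · rw [min_eq_left hαc]; linarith
  · rw [min_eq_right hαc]; linarith [min_le_right (exp (h / lam)) 1]

/-- Two-sided power envelope: any level-`α` test of `μ_0` has power at most
`min{α e^{h/λ}, 1} + 1 − min{e^{h/λ}, 1}` at every `μ_h`. -/
theorem power_envelope_two_sided (lam α : ℝ) (hlam : 0 < lam) (hα : α ∈ Set.Ioo (0 : ℝ) 1)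
    (ψ : ℝ → ℝ) (hmeas : Measurable ψ) (hrange : ∀ w, ψ w ∈ Set.Icc (0 : ℝ) 1)
    (hsize : ∫ w, ψ w ∂ expShift lam 0 ≤ α) :
    ∀ h : ℝ, ∫ w, ψ w ∂ expShift lam h ≤
      min (α * exp (h / lam)) 1 + 1 - min (exp (h / lam)) 1 :=
  power_envelope_two_sided_general lam α hlam ψ hmeas hrange hsize
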